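/- Let U* ⊆ {1,…,M} have cardinality m ≥ 1 and V* ⊆ {1,…,N} have cardinality n ≥ 1, with characteristic vectors ū ∈ R^M and v̄ ∈ R^N, and let X* = ū v̄ᵀ. Suppose X* is feasible for the relaxation (R), i.e., U* × V* ⊆ E. Suppose there exist W ∈ R^{M×N}, λ ∈ R^{M×N}, and μ ≥ 0 such that W v̄ = 0, ūᵀ W = 0, ‖W‖ ≤ 1, and ū v̄ᵀ/√(mn) + W = μ e eᵀ + Σ_{(i,j) ∈ Ẽ} λ_{ij} e_i e_jᵀ, where e is the all-ones vector and e_i is the i-th standard basis vector. Then X* is an optimal solution of (R), i.e., every X ∈ R^{M×N} with Σ_{i,j} X_{ij} ≥ mn and X_{ij} = 0 for all (i,j) ∈ Ẽ satisfies ‖X‖_* ≥ ‖X*‖_* = √(mn). -/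

import Mathlib

open Matrix

/-- The spectral norm (largest singular value) of a real matrix. -/
noncomputable def matrixSpectralNorm {m n : Type*} [Fintype m] [Fintype n] [DecidableEq n]
    (A : Matrix m n ℝ) : ℝ :=
  ‖LinearMap.toContinuousLinearMap (Matrix.toEuclideanLin A)‖

/-- The nuclear norm (sum of singular values) of a real matrix. -/
noncomputable def nuclearNorm {m n : Type*} [Fintype m] [Fintype n] [DecidableEq n]
    (A : Matrix m n ℝ) : ℝ :=
  ∑ j, Real.sqrt ((by simpa using Matrix.isHermitian_conjTranspose_mul_self A :
    (Aᵀ * A).IsHermitian).eigenvalues j)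

/-- The characteristic vector of a finite set of indices. -/
def charVec {ι : Type*} [DecidableEq ι] (S : Finset ι) : ι → ℝ :=
  fun i => if i ∈ S then 1 else 0

/-- Feasibility for the relaxation (R): `∑_{i,j} X_{ij} ≥ mn` and `X_{ij} = 0` for all
`(i,j)` in the complement of `E`. -/
def FeasR {M N : ℕ} (E : Set (Fin M × Fin N)) (m n : ℕ)
    (X : Matrix (Fin M) (Fin N) ℝ) : Prop :=
  (m : ℝ) * n ≤ (∑ i, ∑ j, X i j) ∧ ∀ i j, (i, j) ∉ E → X i j = 0

/-! The dual certificate `A = ūv̄ᵀ/√(mn) + W` has spectral norm at most one: on `v̄` it acts by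
the rank-one part and on `v̄^⊥` by `W`, and the two images are orthogonal because `ūᵀW = 0`.
Trace duality then gives `⟪A, X⟫ ≤ ‖X‖_*`. Since `A = μeeᵀ + Λ` with `Λ` vanishing on `E`, every
`X` supported on `E` has `⟪A, X⟫ = μ ∑ X_{ij}`; testing this on `X*` gives `μmn = ⟪A, X*⟫ = √(mn)`,
so every feasible `X` has `‖X‖_* ≥ μmn = √(mn)`. Finally `X*` has the single nonzero singular value
`‖ū‖‖v̄‖ = √(mn)`. -/

open WithLp

lemma isHermitian_transpose_mul_self {m n : Type*} [Fintype m] (A : Matrix m n ℝ) :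
    (Aᵀ * A).IsHermitian := by
  simpa using isHermitian_conjTranspose_mul_self A

lemma Matrix.IsHermitian.eigenvalues_mul_self_eq {n : Type*} [Fintype n] [DecidableEq n]
    {B : Matrix n n ℝ} (hB : B.IsHermitian) {c : ℝ} (hsq : B * B = c • B) (j : n) :
    hB.eigenvalues j * hB.eigenvalues j = c * hB.eigenvalues j := by
  set b := ⇑(hB.eigenvectorBasis j)
  have hval : hB.eigenvalues j = b ⬝ᵥ (B *ᵥ b) := by simpa using hB.eigenvalues_eq j
  calc hB.eigenvalues j * hB.eigenvalues j = b ⬝ᵥ ((B * B) *ᵥ b) := by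
        rw [← mulVec_mulVec, hB.mulVec_eigenvectorBasis, mulVec_smul, dotProduct_smul, ← hval,
          smul_eq_mul]
    _ = c * hB.eigenvalues j := by rw [hsq, smul_mulVec, dotProduct_smul, ← hval, smul_eq_mul]

lemma charVec_dotProduct_self {ι : Type*} [Fintype ι] [DecidableEq ι] (S : Finset ι) :
    charVec S ⬝ᵥ charVec S = S.card := by
  simp [dotProduct, charVec]

lemma sum_charVec {ι : Type*} [Fintype ι] [DecidableEq ι] (S : Finset ι) :
    ∑ i, charVec S i = S.card := by
  simp [charVec]

section

variable {m n : Type*} [Fintype m] [Fintype n]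

lemma norm_toLp_sq (x : n → ℝ) : ‖(toLp 2 x : EuclideanSpace ℝ n)‖ ^ 2 = x ⬝ᵥ x := by
  rw [← real_inner_self_eq_norm_sq, EuclideanSpace.inner_toLp_toLp, star_trivial]

lemma norm_toLp_mulVec_le [DecidableEq n] (A : Matrix m n ℝ) (x : n → ℝ) :
    ‖toLp 2 (A *ᵥ x)‖ ≤ matrixSpectralNorm A * ‖toLp 2 x‖ :=
  (LinearMap.toContinuousLinearMap (toEuclideanLin A)).le_opNorm (toLp 2 x)

lemma matrixSpectralNorm_le_one_iff [DecidableEq n] (A : Matrix m n ℝ) :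
    matrixSpectralNorm A ≤ 1 ↔ ∀ x, (A *ᵥ x) ⬝ᵥ (A *ᵥ x) ≤ x ⬝ᵥ x := by
  rw [matrixSpectralNorm, ContinuousLinearMap.opNorm_le_iff zero_le_one,
    (WithLp.equiv 2 (n → ℝ)).forall_congr_left]
  refine forall_congr' fun x => ?_
  rw [one_mul, ← sq_le_sq₀ (norm_nonneg _) (norm_nonneg _)]
  simp [toLpLin_apply, ← norm_toLp_sq]

lemma matrixSpectralNorm_inv_sqrt_smul_vecMulVec_add_le_one [DecidableEq n]
    (u : m → ℝ) (v : n → ℝ) (W : Matrix m n ℝ)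
    (hWv : W *ᵥ v = 0) (hWu : u ᵥ* W = 0) (hW : matrixSpectralNorm W ≤ 1) :
    matrixSpectralNorm ((√((u ⬝ᵥ u) * (v ⬝ᵥ v)))⁻¹ • vecMulVec u v + W) ≤ 1 := by
  rw [matrixSpectralNorm_le_one_iff] at hW ⊢
  intro x
  set a := u ⬝ᵥ u
  set b := v ⬝ᵥ v
  set t := v ⬝ᵥ x
  have ha : 0 ≤ a := dotProduct_self_star_nonneg u
  have hb : 0 ≤ b := dotProduct_self_star_nonneg v
  -- the component of `x` orthogonal to `v`; when `v = 0`, `t / b = 0` and `y = x`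
  set y := x - (t / b) • v
  have hAx : ((√(a * b))⁻¹ • vecMulVec u v + W) *ᵥ x = ((√(a * b))⁻¹ * t) • u + W *ᵥ y := by
    simp [y, t, add_mulVec, smul_mulVec, vecMulVec_mulVec, mulVec_sub, mulVec_smul, hWv,
      smul_smul]
  have huWy : u ⬝ᵥ (W *ᵥ y) = 0 := by rw [dotProduct_mulVec, hWu, zero_dotProduct]
  have hyy : y ⬝ᵥ y = x ⬝ᵥ x - t ^ 2 / b := by
    have hexpand : y ⬝ᵥ y = x ⬝ᵥ x - 2 * (t / b) * t + (t / b) ^ 2 * b := by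
      simp only [y, sub_dotProduct, dotProduct_sub, smul_dotProduct, dotProduct_smul,
        dotProduct_comm x v, smul_eq_mul]
      ring
    rcases eq_or_ne b 0 with hb0 | hb0
    · simp [hexpand, hb0]
    · rw [hexpand]
      field_simp
      ring
  have hcoef : ((√(a * b))⁻¹ * t) ^ 2 * a ≤ t ^ 2 / b := by
    rw [mul_pow, inv_pow, Real.sq_sqrt (mul_nonneg ha hb)]
    rcases eq_or_ne a 0 with ha0 | ha0
    · rw [ha0, mul_zero]
      positivity
    · exact le_of_eq (by field_simp)
  calc _ = ((√(a * b))⁻¹ * t) ^ 2 * a + (W *ᵥ y) ⬝ᵥ (W *ᵥ y) := by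
        rw [hAx]
        simp only [add_dotProduct, dotProduct_add, smul_dotProduct, dotProduct_smul, huWy,
          dotProduct_comm (W *ᵥ y) u, smul_eq_mul]
        ring
    _ ≤ t ^ 2 / b + y ⬝ᵥ y := add_le_add hcoef (hW y)
    _ = x ⬝ᵥ x := by rw [hyy]; ring

lemma sum_mul_eq_sum_dotProduct_mulVec {ι : Type*} [Fintype ι]
    (A X : Matrix m n ℝ) (b : OrthonormalBasis ι ℝ (EuclideanSpace ℝ n)) :
    ∑ i, ∑ j, A i j * X i j = ∑ k, (A *ᵥ b k) ⬝ᵥ (X *ᵥ b k) := by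
  have row (i : m) : ∑ j, A i j * X i j = ∑ k, (A *ᵥ b k) i * (X *ᵥ b k) i := by
    have parseval := b.sum_inner_mul_inner (toLp 2 (A i)) (toLp 2 (X i))
    simp only [EuclideanSpace.inner_eq_star_dotProduct, star_trivial,
      dotProduct_comm _ (A i)] at parseval
    exact parseval.symm
  simp_rw [row, dotProduct]
  exact Finset.sum_comm

lemma norm_toLp_mulVec_eigenvectorBasis [DecidableEq n] (X : Matrix m n ℝ) (k : n) :
    ‖toLp 2 (X *ᵥ (isHermitian_transpose_mul_self X).eigenvectorBasis k)‖
      = √((isHermitian_transpose_mul_self X).eigenvalues k) := by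
  rw [← Real.sqrt_sq (norm_nonneg _), norm_toLp_sq,
    (isHermitian_transpose_mul_self X).eigenvalues_eq k]
  simp [← mulVec_mulVec, dotProduct_mulVec, vecMul_transpose]

lemma sum_mul_le_matrixSpectralNorm_mul_nuclearNorm [DecidableEq n] (A X : Matrix m n ℝ) :
    ∑ i, ∑ j, A i j * X i j ≤ matrixSpectralNorm A * nuclearNorm X := by
  set hB := isHermitian_transpose_mul_self X
  rw [sum_mul_eq_sum_dotProduct_mulVec A X hB.eigenvectorBasis, nuclearNorm, Finset.mul_sum]
  refine Finset.sum_le_sum fun k _ => ?_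
  set b := hB.eigenvectorBasis k
  have hb : ‖b‖ = 1 := hB.eigenvectorBasis.orthonormal.1 k
  calc (A *ᵥ b) ⬝ᵥ (X *ᵥ b)
      ≤ ‖toLp 2 (X *ᵥ b)‖ * ‖toLp 2 (A *ᵥ b)‖ := by
        simpa [EuclideanSpace.inner_toLp_toLp] using
          real_inner_le_norm (toLp 2 (X *ᵥ b)) (toLp 2 (A *ᵥ b))
    _ ≤ √(hB.eigenvalues k) * matrixSpectralNorm A := by
        rw [norm_toLp_mulVec_eigenvectorBasis]
        gcongr
        simpa [hb] using norm_toLp_mulVec_le A b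
    _ = matrixSpectralNorm A * √(hB.eigenvalues k) := mul_comm _ _

lemma nuclearNorm_nonneg [DecidableEq n] (X : Matrix m n ℝ) : 0 ≤ nuclearNorm X :=
  Finset.sum_nonneg fun _ _ => Real.sqrt_nonneg _

lemma nuclearNorm_vecMulVec [DecidableEq n] (u : m → ℝ) (v : n → ℝ) :
    nuclearNorm (vecMulVec u v) = √((u ⬝ᵥ u) * (v ⬝ᵥ v)) := by
  set c := (u ⬝ᵥ u) * (v ⬝ᵥ v)
  set hB := isHermitian_transpose_mul_self (vecMulVec u v)
  have hgram : (vecMulVec u v)ᵀ * vecMulVec u v = (u ⬝ᵥ u) • vecMulVec v v := by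
    rw [transpose_vecMulVec, vecMulVec_mul_vecMulVec, vecMulVec_smul]
  have hsq : ((vecMulVec u v)ᵀ * vecMulVec u v) * ((vecMulVec u v)ᵀ * vecMulVec u v)
      = c • ((vecMulVec u v)ᵀ * vecMulVec u v) := by
    rw [hgram, smul_mul_smul_comm, vecMulVec_mul_vecMulVec, vecMulVec_smul, smul_smul, smul_smul]
    congr 1
    ring
  -- every eigenvalue is `0` or `c`
  have hsqrt (j : n) : √(hB.eigenvalues j) = hB.eigenvalues j / √c := by
    have hroot : hB.eigenvalues j * (hB.eigenvalues j - c) = 0 := by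
      linear_combination hB.eigenvalues_mul_self_eq hsq j
    rcases mul_eq_zero.1 hroot with h | h
    · rw [h, Real.sqrt_zero, zero_div]
    · rw [sub_eq_zero.1 h, Real.div_sqrt]
  have htrace : ∑ j, hB.eigenvalues j = c :=
    calc ∑ j, hB.eigenvalues j = ((vecMulVec u v)ᵀ * vecMulVec u v).trace := by
          simpa using hB.trace_eq_sum_eigenvalues.symm
      _ = c := by rw [hgram, trace_smul, trace_vecMulVec, smul_eq_mul]
  unfold nuclearNorm
  simp_rw [hsqrt]
  rw [← Finset.sum_div, htrace, Real.div_sqrt]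

lemma sum_vecMulVec (u : m → ℝ) (v : n → ℝ) :
    ∑ i, ∑ j, vecMulVec u v i j = (∑ i, u i) * ∑ j, v j := by
  simp only [vecMulVec_apply, Finset.sum_mul_sum]

lemma sum_mul_vecMulVec (A : Matrix m n ℝ) (u : m → ℝ) (v : n → ℝ) :
    ∑ i, ∑ j, A i j * vecMulVec u v i j = u ⬝ᵥ (A *ᵥ v) := by
  simp only [vecMulVec_apply, dotProduct, mulVec, Finset.mul_sum]
  exact Finset.sum_congr rfl fun i _ => Finset.sum_congr rfl fun j _ => by ring

lemma sum_inv_sqrt_smul_vecMulVec_add_mul_vecMulVec (u : m → ℝ) (v : n → ℝ) (W : Matrix m n ℝ)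
    (hWv : W *ᵥ v = 0) :
    ∑ i, ∑ j, ((√((u ⬝ᵥ u) * (v ⬝ᵥ v)))⁻¹ • vecMulVec u v + W) i j * vecMulVec u v i j
      = √((u ⬝ᵥ u) * (v ⬝ᵥ v)) := by
  simp only [sum_mul_vecMulVec, add_mulVec, smul_mulVec, vecMulVec_mulVec, op_smul_eq_smul, hWv,
    add_zero, dotProduct_smul, smul_eq_mul]
  rw [mul_comm (v ⬝ᵥ v), inv_mul_eq_div, Real.div_sqrt]

lemma sum_smul_ones_add_mul {E : Set (m × n)} {Λ X : Matrix m n ℝ} (μ : ℝ)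
    (hΛ : ∀ i j, (i, j) ∈ E → Λ i j = 0) (hX : ∀ i j, (i, j) ∉ E → X i j = 0) :
    ∑ i, ∑ j, (μ • of (fun _ _ => (1 : ℝ)) + Λ : Matrix m n ℝ) i j * X i j
      = μ * ∑ i, ∑ j, X i j := by
  simp only [Finset.mul_sum]
  refine Finset.sum_congr rfl fun i _ => Finset.sum_congr rfl fun j _ => ?_
  by_cases hij : (i, j) ∈ E <;> simp [hΛ, hX, hij]

end

theorem relaxation_optimality_general
    (M N m n : ℕ)
    (E : Set (Fin M × Fin N))
    (Ustar : Finset (Fin M)) (Vstar : Finset (Fin N))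
    (hUm : Ustar.card = m) (hVn : Vstar.card = n)
    (hfeas : ∀ i ∈ Ustar, ∀ j ∈ Vstar, (i, j) ∈ E)
    (W Λ : Matrix (Fin M) (Fin N) ℝ) (μ : ℝ) (hμ : 0 ≤ μ)
    (hWv : W *ᵥ charVec Vstar = 0)
    (hWu : charVec Ustar ᵥ* W = 0)
    (hWnorm : matrixSpectralNorm W ≤ 1)
    (hΛ : ∀ i j, (i, j) ∈ E → Λ i j = 0)
    (heq : (Real.sqrt ((m : ℝ) * n))⁻¹ • vecMulVec (charVec Ustar) (charVec Vstar) + W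
         = μ • Matrix.of (fun _ _ => (1 : ℝ)) + Λ) :
    (∀ X : Matrix (Fin M) (Fin N) ℝ, FeasR E m n X →
        nuclearNorm X ≥ Real.sqrt ((m : ℝ) * n)) ∧
    nuclearNorm (vecMulVec (charVec Ustar) (charVec Vstar)) = Real.sqrt ((m : ℝ) * n) := by
  set u := charVec Ustar
  set v := charVec Vstar
  have hnorms : (u ⬝ᵥ u) * (v ⬝ᵥ v) = (m : ℝ) * n := by
    rw [charVec_dotProduct_self, charVec_dotProduct_self, hUm, hVn]
  set A := (√((m : ℝ) * n))⁻¹ • vecMulVec u v + W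
  have hA : matrixSpectralNorm A ≤ 1 := by
    simpa only [hnorms] using
      matrixSpectralNorm_inv_sqrt_smul_vecMulVec_add_le_one u v W hWv hWu hWnorm
  have hXstar (i j) (hij : (i, j) ∉ E) : vecMulVec u v i j = 0 := by
    by_cases hi : i ∈ Ustar <;> by_cases hj : j ∈ Vstar <;>
      simp [u, v, charVec, vecMulVec_apply, hi, hj]
    exact hij (hfeas i hi j hj)
  have hμmn : μ * (m * n) = √((m : ℝ) * n) :=
    calc μ * (m * n) = μ * ∑ i, ∑ j, vecMulVec u v i j := by
          rw [sum_vecMulVec, sum_charVec, sum_charVec, hUm, hVn]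
      _ = ∑ i, ∑ j, A i j * vecMulVec u v i j := by rw [heq, sum_smul_ones_add_mul μ hΛ hXstar]
      _ = √((m : ℝ) * n) := by
          simpa only [hnorms] using sum_inv_sqrt_smul_vecMulVec_add_mul_vecMulVec u v W hWv
  refine ⟨fun X ⟨hsum, hsupp⟩ => ?_, by rw [nuclearNorm_vecMulVec, hnorms]⟩
  calc √((m : ℝ) * n) = μ * (m * n) := hμmn.symm
    _ ≤ μ * ∑ i, ∑ j, X i j := mul_le_mul_of_nonneg_left hsum hμ
    _ = ∑ i, ∑ j, A i j * X i j := by rw [heq, sum_smul_ones_add_mul μ hΛ hsupp]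
    _ ≤ matrixSpectralNorm A * nuclearNorm X := sum_mul_le_matrixSpectralNorm_mul_nuclearNorm A X
    _ ≤ nuclearNorm X := mul_le_of_le_one_left (nuclearNorm_nonneg X) hA

/-- under the KKT-type conditions, `X* = ū v̄ᵀ` is an optimal solution of the
relaxation (R): every feasible `X` has `‖X‖_* ≥ ‖X*‖_* = √(mn)`. -/
theorem relaxation_optimality
    (M N m n : ℕ) (hm : 1 ≤ m) (hn : 1 ≤ n)
    (E : Set (Fin M × Fin N))
    (Ustar : Finset (Fin M)) (Vstar : Finset (Fin N))
    (hUm : Ustar.card = m) (hVn : Vstar.card = n)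
    (hfeas : ∀ i ∈ Ustar, ∀ j ∈ Vstar, (i, j) ∈ E)
    (W Λ : Matrix (Fin M) (Fin N) ℝ) (μ : ℝ) (hμ : 0 ≤ μ)
    (hWv : W *ᵥ charVec Vstar = 0)
    (hWu : charVec Ustar ᵥ* W = 0)
    (hWnorm : matrixSpectralNorm W ≤ 1)
    (hΛ : ∀ i j, (i, j) ∈ E → Λ i j = 0)
    (heq : (Real.sqrt ((m : ℝ) * n))⁻¹ • vecMulVec (charVec Ustar) (charVec Vstar) + W
         = μ • Matrix.of (fun _ _ => (1 : ℝ)) + Λ) :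
    (∀ X : Matrix (Fin M) (Fin N) ℝ, FeasR E m n X →
        nuclearNorm X ≥ Real.sqrt ((m : ℝ) * n)) ∧
    nuclearNorm (vecMulVec (charVec Ustar) (charVec Vstar)) = Real.sqrt ((m : ℝ) * n) :=
  relaxation_optimality_general M N m n E Ustar Vstar hUm hVn hfeas W Λ μ hμ hWv hWu hWnorm hΛ heq
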